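/- Let α ≥ 0, z ∈ D, and θ ∈ [0, 2π]. Then |∂/∂z [P_α(z e^{−iθ})]| + |∂/∂z̄ [P_α(z e^{−iθ})]| ≤ (α+1) 2^α ( |∂/∂z [P(z e^{−iθ})]| + |∂/∂z̄ [P(z e^{−iθ})]| ), where P(z) = (1−|z|²)/|1−z|² is the ordinary Poisson kernel and the derivatives are Wirtinger derivatives in z. -/

import Mathlib

open Complex MeasureTheory Metric Real Set intervalIntegral

noncomputable section

/-- The open unit disc in the complex plane. -/
def unitDisc : Set ℂ := Metric.ball 0 1

/-- The unit circle in the complex plane. -/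
def unitCircle : Set ℂ := Metric.sphere 0 1

/-- The Wirtinger derivative `∂f/∂z = (1/2)(f_x - i f_y)`. -/
def wderiv (f : ℂ → ℂ) (z : ℂ) : ℂ :=
  (fderiv ℝ f z 1 - Complex.I * fderiv ℝ f z Complex.I) / 2

/-- The conjugate Wirtinger derivative `∂f/∂z̄ = (1/2)(f_x + i f_y)`. -/
def wderivBar (f : ℂ → ℂ) (z : ℂ) : ℂ :=
  (fderiv ℝ f z 1 + Complex.I * fderiv ℝ f z Complex.I) / 2

/-- `‖D_f(z)‖ = |f_z(z)| + |f_z̄(z)|`, the operator norm of the real Jacobian. -/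
def jacNorm (f : ℂ → ℂ) (z : ℂ) : ℝ :=
  ‖wderiv f z‖ + ‖wderivBar f z‖

/-- `f` is α-harmonic on the unit disc: `∂/∂z[(1-|z|²)^{-α} ∂f/∂z̄] = 0` on `𝔻`. -/
def IsAlphaHarmonic (α : ℝ) (f : ℂ → ℂ) : Prop :=
  ∀ z ∈ unitDisc,
    wderiv (fun w => (((1 - ‖w‖ ^ 2) ^ (-α) : ℝ) : ℂ) * wderivBar f w) z = 0

/-- The α-harmonic Poisson kernel `P_α(z) = (1-|z|²)^{α+1}/((1-z)(1-z̄)^{α+1})`. -/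
def alphaPoissonKernel (α : ℝ) (z : ℂ) : ℂ :=
  (((1 - ‖z‖ ^ 2) ^ (α + 1) : ℝ) : ℂ) /
    ((1 - z) * (1 - (starRingEnd ℂ) z) ^ ((α : ℂ) + 1))

/-- The Poisson-type integral `P_α[f*](z) = (1/2π) ∫₀^{2π} P_α(z e^{-iθ}) f*(e^{iθ}) dθ`. -/
def alphaPoissonIntegral (α : ℝ) (fstar : ℂ → ℂ) (z : ℂ) : ℂ :=
  (1 / (2 * Real.pi) : ℝ) • ∫ θ in (0:ℝ)..(2 * Real.pi),
    alphaPoissonKernel α (z * Complex.exp (-(θ : ℂ) * Complex.I)) *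
      fstar (Complex.exp ((θ : ℂ) * Complex.I))

/-- The ordinary Poisson kernel `P(z) = (1-|z|²)/|1-z|²`. -/
def poissonKernelR (z : ℂ) : ℝ := (1 - ‖z‖ ^ 2) / ‖1 - z‖ ^ 2

/-- `h(s) = ∫₀^s t^α/(1-t) dt`. -/
def greenH (α : ℝ) (s : ℝ) : ℝ := ∫ t in (0:ℝ)..s, t ^ α / (1 - t)

/-- `φ(z,w) = (1-|z|²)(1-|w|²)/|1 - z w̄|²`. -/
def greenPhi (z w : ℂ) : ℝ :=
  (1 - ‖z‖ ^ 2) * (1 - ‖w‖ ^ 2) /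
    ‖1 - z * (starRingEnd ℂ) w‖ ^ 2

/-- The α-harmonic Green function `G_α(z,w) = -(1 - z w̄)^α h(φ(z,w))`. -/
def greenFn (α : ℝ) (z w : ℂ) : ℂ :=
  -(1 - z * (starRingEnd ℂ) w) ^ (α : ℂ) * ((greenH α (greenPhi z w) : ℝ) : ℂ)

/-- `G[g](z) = ∫_𝔻 G_α(z,w) g(w) dA(w)` with `dA` the normalized area measure. -/
def greenIntegral (α : ℝ) (g : ℂ → ℂ) (z : ℂ) : ℂ :=
  (1 / Real.pi : ℝ) • ∫ w in unitDisc, greenFn α z w * g w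

/-- `‖f*‖_∞ = sup_{ζ ∈ 𝕋} |f*(ζ)|`. -/
def supCircle (fstar : ℂ → ℂ) : ℝ := ⨆ ζ ∈ unitCircle, ‖fstar ζ‖

/-- `‖g‖_∞ = sup_{z ∈ 𝔻} |g(z)|`. -/
def supDisc (g : ℂ → ℂ) : ℝ := ⨆ z ∈ unitDisc, ‖g z‖

/-- The Laplacian of a real-valued function: `Δu = u_{xx} + u_{yy}`. -/
def lapR (u : ℂ → ℝ) (z : ℂ) : ℝ :=
  fderiv ℝ (fun w => fderiv ℝ u w 1) z 1 +
    fderiv ℝ (fun w => fderiv ℝ u w Complex.I) z Complex.I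

/-!
Rotating the variable by `e^{-iθ}` multiplies the Wirtinger derivatives by unimodular constants,
so it suffices to take `θ = 0`. On the disc `P_α(z) = H(z, z̄)` with
`H(a, b) = (1 - ab)^{α+1} / ((1 - a)(1 - b)^{α+1})` holomorphic, so `∂P_α` and `∂̄P_α` are the two
partial derivatives of `H`:
`∂P_α = (1 - |z|²)^α ((1 - z̄) - α z̄ (1 - z)) / ((1 - z)² (1 - z̄)^{α+1})` and
`∂̄P_α = (α + 1)(1 - |z|²)^α / (1 - z̄)^{α+2}`. Since `P = P_0`, `|∂P| = |∂̄P| = |1 - z|⁻²`, while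
the left-hand side is at most `2(α + 1)(1 - |z|²)^α / |1 - z|^{α+2}`; conclude with
`1 - |z|² ≤ 2|1 - z|`.
-/
open ComplexConjugate Filter Topology

theorem fderiv_apply_eq_wderiv_add_wderivBar (f : ℂ → ℂ) (z v : ℂ) :
    fderiv ℝ f z v = wderiv f z * v + wderivBar f z * conj v := by
  have hv : fderiv ℝ f z v = v.re * fderiv ℝ f z 1 + v.im * fderiv ℝ f z I := by
    have : v = v.re • (1 : ℂ) + v.im • I := by simp
    rw [this, map_add, map_smul, map_smul, real_smul, real_smul]
    simp
  rw [hv, wderiv, wderivBar]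
  conv_rhs => rw [← re_add_im v]
  simp only [map_add, map_mul, conj_ofReal, conj_I]
  linear_combination (v.im * fderiv ℝ f z I) * I_sq

theorem wderiv_eq_and_wderivBar_eq_of_fderiv {f : ℂ → ℂ} {z a b : ℂ}
    (h : ∀ v, fderiv ℝ f z v = a * v + b * conj v) :
    wderiv f z = a ∧ wderivBar f z = b := by
  rw [wderiv, wderivBar, h 1, h I]
  simp only [map_one, conj_I]
  constructor
  · linear_combination (-(a - b) / 2) * I_sq
  · linear_combination ((a - b) / 2) * I_sq

theorem wderiv_comp_mul_right (f : ℂ → ℂ) {c : ℂ} (hc : c ≠ 0) (z : ℂ) :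
    wderiv (fun ζ => f (ζ * c)) z = c * wderiv f (z * c) ∧
      wderivBar (fun ζ => f (ζ * c)) z = conj c * wderivBar f (z * c) := by
  let m : ℂ ≃L[ℝ] ℂ := ContinuousLinearEquiv.smulLeft (Units.mk0 c hc)
  have hm : (fun ζ => f (ζ * c)) = f ∘ m := by
    funext ζ; simp [m, mul_comm]
  apply wderiv_eq_and_wderivBar_eq_of_fderiv
  intro v
  rw [hm, m.comp_right_fderiv]
  simp only [m, ContinuousLinearMap.coe_comp, ContinuousLinearEquiv.coe_coe, Function.comp_apply,
    ContinuousLinearEquiv.smulLeft_apply_apply, Units.smul_mk0, smul_eq_mul,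
    fderiv_apply_eq_wderiv_add_wderivBar, map_mul, mul_comm z c]
  ring

theorem jacNorm_comp_mul_right (f : ℂ → ℂ) {c : ℂ} (hc : ‖c‖ = 1) (z : ℂ) :
    jacNorm (fun ζ => f (ζ * c)) z = jacNorm f (z * c) := by
  obtain ⟨h, h'⟩ := wderiv_comp_mul_right f (norm_ne_zero_iff.1 (hc ▸ one_ne_zero)) z
  rw [jacNorm, jacNorm, h, h', norm_mul, norm_mul, norm_conj, hc, one_mul, one_mul]

theorem wderiv_eq_and_wderivBar_eq_of_eventuallyEq {H : ℂ × ℂ → ℂ} {f : ℂ → ℂ} {z a b : ℂ}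
    (hH : DifferentiableAt ℂ H (z, conj z))
    (ha : HasDerivAt (fun ζ => H (ζ, conj z)) a z)
    (hb : HasDerivAt (fun ζ => H (z, ζ)) b (conj z))
    (hf : f =ᶠ[𝓝 z] fun ζ => H (ζ, conj ζ)) :
    wderiv f z = a ∧ wderivBar f z = b := by
  set D := fderiv ℂ H (z, conj z)
  have hD := hH.hasFDerivAt
  have hDa : D (1, 0) = a :=
    (hD.comp_hasDerivAt z ((hasDerivAt_id z).prodMk (hasDerivAt_const _ _))).unique ha
  have hDb : D (0, 1) = b :=
    (hD.comp_hasDerivAt _ ((hasDerivAt_const _ _).prodMk (hasDerivAt_id _))).unique hb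
  have hf' : HasFDerivAt f ((D.restrictScalars ℝ).comp
      ((ContinuousLinearMap.id ℝ ℂ).prod conjCLE.toContinuousLinearMap)) z :=
    ((hD.restrictScalars ℝ).comp z
      ((hasFDerivAt_id z).prodMk conjCLE.hasFDerivAt)).congr_of_eventuallyEq hf
  apply wderiv_eq_and_wderivBar_eq_of_fderiv
  intro v
  have hv : (v, conj v) = v • ((1 : ℂ), (0 : ℂ)) + conj v • ((0 : ℂ), (1 : ℂ)) := by simp
  rw [hf'.fderiv]
  simp only [ContinuousLinearMap.coe_comp, Function.comp_apply,
    ContinuousLinearMap.coe_restrictScalars', ContinuousLinearMap.prod_apply,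
    ContinuousLinearMap.id_apply, ContinuousLinearEquiv.coe_coe, conjCLE_apply]
  rw [hv, map_add, map_smul, map_smul, hDa, hDb, smul_eq_mul, smul_eq_mul, mul_comm v,
    mul_comm (conj v)]

theorem one_sub_mem_slitPlane {z : ℂ} (hz : ‖z‖ < 1) : 1 - z ∈ slitPlane := by
  simpa [sub_eq_add_neg] using mem_slitPlane_of_norm_lt_one (z := -z) (by simpa using hz)

def alphaPoissonKernel₂ (α : ℝ) (p : ℂ × ℂ) : ℂ :=
  (1 - p.1 * p.2) ^ ((α : ℂ) + 1) / ((1 - p.1) * (1 - p.2) ^ ((α : ℂ) + 1))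

theorem alphaPoissonKernel_eq_alphaPoissonKernel₂ (α : ℝ) {z : ℂ} (hz : ‖z‖ ≤ 1) :
    alphaPoissonKernel α z = alphaPoissonKernel₂ α (z, conj z) := by
  have hu : ((1 - ‖z‖ ^ 2 : ℝ) : ℂ) = 1 - z * conj z := by
    rw [mul_conj, normSq_eq_norm_sq]; push_cast; ring
  rw [alphaPoissonKernel, alphaPoissonKernel₂, ofReal_cpow (by nlinarith [norm_nonneg z]), hu]
  push_cast
  ring_nf

section
variable (α : ℝ) {a b : ℂ} (hab : 1 - a * b ∈ slitPlane)
include hab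

theorem differentiableAt_alphaPoissonKernel₂ (ha : 1 - a ≠ 0) (hb : 1 - b ∈ slitPlane) :
    DifferentiableAt ℂ (alphaPoissonKernel₂ α) (a, b) := by
  have hden : (1 - a) * (1 - b) ^ ((α : ℂ) + 1) ≠ 0 :=
    mul_ne_zero ha (by simp [cpow_eq_zero_iff, slitPlane_ne_zero hb])
  unfold alphaPoissonKernel₂
  fun_prop (disch := assumption)

theorem hasDerivAt_alphaPoissonKernel₂_fst (ha : 1 - a ≠ 0) (hb : 1 - b ≠ 0) :
    HasDerivAt (fun ζ => alphaPoissonKernel₂ α (ζ, b))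
      ((1 - a * b) ^ (α : ℂ) * ((1 - b) - α * b * (1 - a)) /
        ((1 - a) ^ 2 * (1 - b) ^ ((α : ℂ) + 1))) a := by
  have hnum := (((hasDerivAt_id' a).mul_const b).const_sub 1).cpow_const (c := (α : ℂ) + 1) hab
  have hden := ((hasDerivAt_id' a).const_sub 1).mul_const ((1 - b) ^ ((α : ℂ) + 1))
  have hbα : (1 - b) ^ ((α : ℂ) + 1) ≠ 0 := by simp [cpow_eq_zero_iff, hb]
  refine (hnum.div hden (mul_ne_zero ha hbα)).congr_deriv ?_
  rw [add_sub_cancel_right, cpow_add _ _ (slitPlane_ne_zero hab), cpow_one]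
  field_simp
  ring

theorem hasDerivAt_alphaPoissonKernel₂_snd (ha : 1 - a ≠ 0) (hb : 1 - b ∈ slitPlane) :
    HasDerivAt (fun ζ => alphaPoissonKernel₂ α (a, ζ))
      ((α + 1) * (1 - a * b) ^ (α : ℂ) / (1 - b) ^ ((α : ℂ) + 2)) b := by
  have hnum := (((hasDerivAt_id' b).const_mul a).const_sub 1).cpow_const (c := (α : ℂ) + 1) hab
  have hden := (((hasDerivAt_id' b).const_sub 1).cpow_const
    (c := (α : ℂ) + 1) hb).const_mul (1 - a)
  have hb0 := slitPlane_ne_zero hb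
  refine (hnum.div hden (mul_ne_zero ha (by simp [cpow_eq_zero_iff, hb0]))).congr_deriv ?_
  rw [add_sub_cancel_right, cpow_add _ _ (slitPlane_ne_zero hab), cpow_add _ _ hb0,
    cpow_add _ _ hb0, cpow_ofNat]
  simp only [cpow_one]
  field_simp
  ring

end

theorem wderiv_and_wderivBar_alphaPoissonKernel (α : ℝ) {z : ℂ} (hz : ‖z‖ < 1) :
    wderiv (alphaPoissonKernel α) z =
        (1 - z * conj z) ^ (α : ℂ) * ((1 - conj z) - α * conj z * (1 - z)) /
          ((1 - z) ^ 2 * (1 - conj z) ^ ((α : ℂ) + 1)) ∧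
      wderivBar (alphaPoissonKernel α) z =
        (α + 1) * (1 - z * conj z) ^ (α : ℂ) / (1 - conj z) ^ ((α : ℂ) + 2) := by
  have hzz : 1 - z * conj z ∈ slitPlane := 
    one_sub_mem_slitPlane (by rw [norm_mul, norm_conj]; nlinarith [norm_nonneg z])
  have h1 : 1 - z ∈ slitPlane := one_sub_mem_slitPlane hz
  have h2 : 1 - conj z ∈ slitPlane := one_sub_mem_slitPlane (by simpa using hz)
  refine wderiv_eq_and_wderivBar_eq_of_eventuallyEq
    (differentiableAt_alphaPoissonKernel₂ α hzz (slitPlane_ne_zero h1) h2)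
    (hasDerivAt_alphaPoissonKernel₂_fst α hzz (slitPlane_ne_zero h1) (slitPlane_ne_zero h2))
    (hasDerivAt_alphaPoissonKernel₂_snd α hzz (slitPlane_ne_zero h1) h2) ?_
  filter_upwards [Metric.isOpen_ball.mem_nhds (mem_ball_zero_iff.2 hz)] with ζ hζ
  exact alphaPoissonKernel_eq_alphaPoissonKernel₂ α (mem_ball_zero_iff.1 hζ).le

theorem ofReal_poissonKernelR (z : ℂ) : (poissonKernelR z : ℂ) = alphaPoissonKernel 0 z := by
  rw [poissonKernelR, alphaPoissonKernel, ofReal_zero, zero_add, zero_add, Real.rpow_one, cpow_one,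
    show 1 - conj z = conj (1 - z) by rw [map_sub, map_one], mul_conj, normSq_eq_norm_sq]
  push_cast
  rfl

theorem norm_one_sub_conj (z : ℂ) : ‖1 - conj z‖ = ‖1 - z‖ := by
  rw [← norm_conj, map_sub, map_one, conj_conj]

theorem one_sub_norm_sq_le_two_mul_norm_one_sub {z : ℂ} (hz : ‖z‖ ≤ 1) :
    1 - ‖z‖ ^ 2 ≤ 2 * ‖1 - z‖ := by
  nlinarith [norm_nonneg z, norm_sub_norm_le (1 : ℂ) z, norm_one (α := ℂ)]

section
variable (α : ℝ) {z : ℂ} (hz : ‖z‖ < 1)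
include hz

theorem norm_one_sub_mul_conj_cpow :
    ‖(1 - z * conj z) ^ (α : ℂ)‖ = (1 - ‖z‖ ^ 2) ^ α := by
  have hu : 1 - z * conj z = ((1 - ‖z‖ ^ 2 : ℝ) : ℂ) := by
    rw [mul_conj, normSq_eq_norm_sq]; push_cast; ring
  rw [hu, norm_cpow_eq_rpow_re_of_pos (by nlinarith [norm_nonneg z]), ofReal_re]

theorem norm_wderiv_alphaPoissonKernel :
    ‖wderiv (alphaPoissonKernel α) z‖ =
      (1 - ‖z‖ ^ 2) ^ α * ‖(1 - conj z) - α * conj z * (1 - z)‖ /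
        (‖1 - z‖ ^ 2 * ‖1 - z‖ ^ (α + 1)) := by
  rw [(wderiv_and_wderivBar_alphaPoissonKernel α hz).1, norm_div, norm_mul, norm_mul, norm_pow,
    norm_one_sub_mul_conj_cpow α hz, show (α : ℂ) + 1 = ((α + 1 : ℝ) : ℂ) by push_cast; ring,
    norm_cpow_real, norm_one_sub_conj]

theorem norm_wderivBar_alphaPoissonKernel :
    ‖wderivBar (alphaPoissonKernel α) z‖ =
      |α + 1| * (1 - ‖z‖ ^ 2) ^ α / ‖1 - z‖ ^ (α + 2) := by
  rw [(wderiv_and_wderivBar_alphaPoissonKernel α hz).2, norm_div, norm_mul,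
    norm_one_sub_mul_conj_cpow α hz, show (α : ℂ) + 1 = ((α + 1 : ℝ) : ℂ) by push_cast; ring,
    show (α : ℂ) + 2 = ((α + 2 : ℝ) : ℂ) by push_cast; ring, norm_real, norm_cpow_real,
    norm_one_sub_conj, Real.norm_eq_abs]

end

theorem jacNorm_alphaPoissonKernel_le {α : ℝ} (hα : 0 ≤ α) {z : ℂ} (hz : ‖z‖ < 1) :
    jacNorm (alphaPoissonKernel α) z ≤ (α + 1) * 2 ^ α * jacNorm (alphaPoissonKernel 0) z := by
  rw [jacNorm, jacNorm, norm_wderiv_alphaPoissonKernel α hz,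
    norm_wderivBar_alphaPoissonKernel α hz, norm_wderiv_alphaPoissonKernel 0 hz,
    norm_wderivBar_alphaPoissonKernel 0 hz]
  set r := ‖1 - z‖
  have hr : 0 < r := norm_pos_iff.2 (slitPlane_ne_zero (one_sub_mem_slitPlane hz))
  have hu : 0 ≤ 1 - ‖z‖ ^ 2 := by nlinarith [norm_nonneg z]
  have hur : 1 - ‖z‖ ^ 2 ≤ 2 * r := one_sub_norm_sq_le_two_mul_norm_one_sub hz.le
  have hX : ‖(1 - conj z) - α * conj z * (1 - z)‖ ≤ (1 + α) * r := by
    calc _ ≤ ‖1 - conj z‖ + ‖(α : ℂ) * conj z * (1 - z)‖ := norm_sub_le _ _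
      _ = r + α * ‖z‖ * r := by
        rw [norm_one_sub_conj, norm_mul, norm_mul, norm_real, norm_conj, Real.norm_of_nonneg hα]
      _ ≤ (1 + α) * r := by nlinarith [mul_le_mul_of_nonneg_left hz.le (mul_nonneg hα hr.le)]
  have hpow : (1 - ‖z‖ ^ 2) ^ α ≤ 2 ^ α * r ^ α := by
    rw [← Real.mul_rpow zero_le_two hr.le]
    exact Real.rpow_le_rpow hu hur hα
  simp only [ofReal_zero, zero_mul, sub_zero, Real.rpow_zero, zero_add, norm_one_sub_conj,
    Real.rpow_one, abs_one, abs_of_nonneg (by linarith : 0 ≤ α + 1)]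
  rw [Real.rpow_add hr, Real.rpow_add hr, Real.rpow_one, Real.rpow_two]
  have hrα : 0 < r ^ α := Real.rpow_pos_of_pos hr α
  calc _ ≤ (1 - ‖z‖ ^ 2) ^ α * ((1 + α) * r) / (r ^ 2 * (r ^ α * r)) +
        (α + 1) * (1 - ‖z‖ ^ 2) ^ α / (r ^ α * r ^ 2) := by gcongr
    _ = 2 * (α + 1) * (1 - ‖z‖ ^ 2) ^ α / (r ^ α * r ^ 2) := by field_simp; ring
    _ ≤ 2 * (α + 1) * (2 ^ α * r ^ α) / (r ^ α * r ^ 2) := by gcongr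
    _ = _ := by field_simp; ring

theorem alphaPoissonKernel_derivs_le_general
    (α : ℝ) (hα : 0 ≤ α) (z : ℂ) (hz : z ∈ unitDisc)
    (θ : ℝ) :
    ‖wderiv (fun ζ => alphaPoissonKernel α (ζ * Complex.exp (-(θ : ℂ) * Complex.I))) z‖ +
        ‖wderivBar (fun ζ => alphaPoissonKernel α (ζ * Complex.exp (-(θ : ℂ) * Complex.I))) z‖ ≤
      (α + 1) * (2 : ℝ) ^ α *
        (‖wderiv (fun ζ =>
              ((poissonKernelR (ζ * Complex.exp (-(θ : ℂ) * Complex.I)) : ℝ) : ℂ)) z‖ +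
          ‖wderivBar (fun ζ =>
              ((poissonKernelR (ζ * Complex.exp (-(θ : ℂ) * Complex.I)) : ℝ) : ℂ)) z‖) := by
  have hc : ‖exp (-(θ : ℂ) * I)‖ = 1 := by rw [norm_exp]; simp
  have hzc : ‖z * exp (-(θ : ℂ) * I)‖ < 1 := by rwa [norm_mul, hc, mul_one, ← mem_ball_zero_iff]
  change jacNorm _ z ≤ _ * jacNorm _ z
  rw [jacNorm_comp_mul_right _ hc, jacNorm_comp_mul_right (fun w => (poissonKernelR w : ℂ)) hc,
    funext ofReal_poissonKernelR]
  exact jacNorm_alphaPoissonKernel_le hα hzc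

/-- the Wirtinger derivatives of the α-harmonic Poisson kernel are
dominated by `(α+1)2^α` times those of the ordinary Poisson kernel. -/
theorem alphaPoissonKernel_derivs_le
    (α : ℝ) (hα : 0 ≤ α) (z : ℂ) (hz : z ∈ unitDisc)
    (θ : ℝ) (hθ : θ ∈ Set.Icc (0 : ℝ) (2 * Real.pi)) :
    ‖wderiv (fun ζ => alphaPoissonKernel α (ζ * Complex.exp (-(θ : ℂ) * Complex.I))) z‖ +
        ‖wderivBar (fun ζ => alphaPoissonKernel α (ζ * Complex.exp (-(θ : ℂ) * Complex.I))) z‖ ≤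
      (α + 1) * (2 : ℝ) ^ α *
        (‖wderiv (fun ζ =>
              ((poissonKernelR (ζ * Complex.exp (-(θ : ℂ) * Complex.I)) : ℝ) : ℂ)) z‖ +
          ‖wderivBar (fun ζ =>
              ((poissonKernelR (ζ * Complex.exp (-(θ : ℂ) * Complex.I)) : ℝ) : ℂ)) z‖) :=
  alphaPoissonKernel_derivs_le_general α hα z hz θ
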